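/- There exists an absolute constant c_E > 0 with the following property. Let {0} = L_0 ⊂ L_1 ⊂ ⋯ ⊂ L_m = L be a (q, γ)-filtration of a full-rank lattice L ⊆ ℝⁿ with γ ≥ 2 and q ≤ γ²/32, let 1/2 ≤ α < 1, and for 1 ≤ j ≤ m let E_{j,α}(x) = Σ_{i=j}^m α^{i−j}·π_i(x), where π_i is the orthogonal projection onto span(L_i) ∩ span(L_{i−1})^⊥. Then for all x, y ∈ ℝⁿ: Σ_{j=1}^m min(dist(E_{j,α}(x − y), E_{j,α}(L)), q²·λ₁(E_{j,α}(L)))² ≥ c_E · dist(x − y, L)². -/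

import Mathlib

open Metric Submodule
noncomputable section

/-- The length of a shortest nonzero vector of a set `A`. -/
def lambda1 {E : Type*} [NormedAddCommGroup E] (A : Set E) : ℝ :=
  sInf (norm '' (A \ {0}))

/-- The covering radius of a lattice (given as a set): the supremum, over points `x` in the
real span of `A`, of the distance from `x` to `A`. -/
def covRad {E : Type*} [NormedAddCommGroup E] [NormedSpace ℝ E] (A : Set E) : ℝ :=
  sSup ((fun x => Metric.infDist x A) '' ((Submodule.span ℝ A : Submodule ℝ E) : Set E))

/-- The image of the set `A` under the orthogonal projection onto the orthogonal complement
of the real span of `S`. -/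
def projPerp {n : ℕ} (S A : Set (EuclideanSpace ℝ (Fin n))) : Set (EuclideanSpace ℝ (Fin n)) :=
  (fun x => ((orthogonalProjection (Submodule.span ℝ S)ᗮ) x : EuclideanSpace ℝ (Fin n))) '' A

/-- The quotient lattice `L_j / L_{j−1}`: the orthogonal projection of `L_j` onto the
orthogonal complement of the span of `L_{j−1}`. -/
def quotLat {n : ℕ} (Ls : ℕ → Submodule ℤ (EuclideanSpace ℝ (Fin n))) (j : ℕ) :
    Set (EuclideanSpace ℝ (Fin n)) :=
  projPerp (Ls (j - 1) : Set (EuclideanSpace ℝ (Fin n)))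
    (Ls j : Set (EuclideanSpace ℝ (Fin n)))

/-- `Ls 0 ⊂ Ls 1 ⊂ ⋯ ⊂ Ls m` is a chain of primitive sublattices of `L` from `{0}` to `L`. -/
def IsPrimitiveChain {n : ℕ} (L : Submodule ℤ (EuclideanSpace ℝ (Fin n))) (m : ℕ)
    (Ls : ℕ → Submodule ℤ (EuclideanSpace ℝ (Fin n))) : Prop :=
  Ls 0 = ⊥ ∧ Ls m = L ∧ (∀ j, j < m → Ls j < Ls (j + 1)) ∧
    ∀ j, j ≤ m → (Ls j : Set (EuclideanSpace ℝ (Fin n)))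
      = (L : Set (EuclideanSpace ℝ (Fin n)))
        ∩ (Submodule.span ℝ (Ls j : Set (EuclideanSpace ℝ (Fin n))) :
            Submodule ℝ (EuclideanSpace ℝ (Fin n)))

/-- A `(q, γ)`-filtration of `L`: a chain of primitive sublattices such that
`μ(L_j/L_{j−1}) ≤ q·λ₁(L_j/L_{j−1})/2` and `λ₁(L_{j+1}/L_j) ≥ γ·λ₁(L_j/L_{j−1})`. -/
def IsQGFiltration {n : ℕ} (L : Submodule ℤ (EuclideanSpace ℝ (Fin n))) (m : ℕ)
    (Ls : ℕ → Submodule ℤ (EuclideanSpace ℝ (Fin n))) (q γ : ℝ) : Prop :=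
  IsPrimitiveChain L m Ls ∧
  (∀ j, 1 ≤ j → j ≤ m → covRad (quotLat Ls j) ≤ q * lambda1 (quotLat Ls j) / 2) ∧
  (∀ j, 1 ≤ j → j < m → lambda1 (quotLat Ls (j + 1)) ≥ γ * lambda1 (quotLat Ls j))

/-- The `j`-th "compressed projection" embedding `E_{j,α}(x) = Σ_{i=j}^m α^{i−j}·π_i(x)`,
where `π_i` is the orthogonal projection onto `span(L_i) ∩ span(L_{i−1})ᗮ`. -/
def filtEmbed {n : ℕ} (Ls : ℕ → Submodule ℤ (EuclideanSpace ℝ (Fin n))) (m : ℕ) (α : ℝ)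
    (j : ℕ) (x : EuclideanSpace ℝ (Fin n)) : EuclideanSpace ℝ (Fin n) :=
  ∑ i ∈ Finset.Icc j m, α ^ (i - j) •
    ((orthogonalProjection
        ((Submodule.span ℝ (Ls i : Set (EuclideanSpace ℝ (Fin n)))) ⊓
          (Submodule.span ℝ (Ls (i - 1) : Set (EuclideanSpace ℝ (Fin n))))ᗮ) x :
      EuclideanSpace ℝ (Fin n)))

/-!
Write `d = dist(x - y, L)` and let `J` be the first level with `d ≤ q λ_J`, where `λ_j` is the
first minimum of `L_j / L_{j-1}`. Since the `λ_j` grow at least geometrically, so do the covering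
radii, and `L_{J-1}` covers its span within `d / √3`. Suppose the capped distances at the levels
`J, …, m` were all small, witnessed by lattice vectors `w_j`. The caps are at least `d`, so the
vectors `E_j(x - y - w_j)` are short. As `λ_t` grows like `γ^t` while `α ≥ 1/2` loses at most
`2^t`, no `w_j` has a block at a level `t ≥ max j (J + 2)`. Hence every block of `x - y - w_J` at a
level `≥ J` is bounded by some `‖E_j(x - y - w_j)‖`, and correcting the part of `x - y - w_J` in
`span L_{J-1}` by a point of `L_{J-1}` gives a lattice point closer to `x - y` than `d`.
-/

open scoped RealInnerProductSpace

section MetricApprox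

variable {X : Type*} [PseudoMetricSpace X]

theorem exists_dist_sq_lt_of_infDist_sq_le {S : Set X} (hS : S.Nonempty) {x : X} {b ε : ℝ}
    (h : infDist x S ^ 2 ≤ b) (hε : 0 < ε) : ∃ p ∈ S, dist x p ^ 2 < b + ε := by
  have hlt : infDist x S < √(b + ε) := (Real.lt_sqrt infDist_nonneg).2 (by linarith)
  obtain ⟨p, hp, hxp⟩ := (infDist_lt_iff hS).1 hlt
  exact ⟨p, hp, (Real.lt_sqrt dist_nonneg).1 hxp⟩

theorem le_sum_sq_infDist {ι : Type*} (s : Finset ι) {x : ι → X} {S : ι → Set X}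
    (hS : ∀ i, (S i).Nonempty) {c : ℝ}
    (h : ∀ p : ι → X, (∀ i, p i ∈ S i) → c ≤ ∑ i ∈ s, dist (x i) (p i) ^ 2) :
    c ≤ ∑ i ∈ s, infDist (x i) (S i) ^ 2 := by
  refine le_of_forall_pos_lt_add fun ε hε => ?_
  have hδ : 0 < ε / (s.card + 1) := by positivity
  choose p hpS hp using fun i => exists_dist_sq_lt_of_infDist_sq_le (hS i) le_rfl hδ (x := x i)
  calc c ≤ ∑ i ∈ s, dist (x i) (p i) ^ 2 := h p hpS
    _ ≤ ∑ i ∈ s, (infDist (x i) (S i) ^ 2 + ε / (s.card + 1)) :=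
      Finset.sum_le_sum fun i _ => (hp i).le
    _ = ∑ i ∈ s, infDist (x i) (S i) ^ 2 + s.card * ε / (s.card + 1) := by
      rw [Finset.sum_add_distrib, Finset.sum_const, nsmul_eq_mul, mul_div_assoc]
    _ < ∑ i ∈ s, infDist (x i) (S i) ^ 2 + ε := by
      gcongr
      rw [div_lt_iff₀ (by positivity)]
      linarith

end MetricApprox

section Minima

variable {E : Type*} [NormedAddCommGroup E]

theorem lambda1_nonneg (A : Set E) : 0 ≤ lambda1 A :=
  Real.sInf_nonneg (by rintro _ ⟨z, _, rfl⟩; exact norm_nonneg z)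

theorem lambda1_le_norm {A : Set E} {z : E} (hz : z ∈ A) (h0 : z ≠ 0) : lambda1 A ≤ ‖z‖ :=
  csInf_le ⟨0, by rintro _ ⟨y, _, rfl⟩; exact norm_nonneg y⟩ ⟨z, ⟨hz, h0⟩, rfl⟩

theorem le_lambda1 {A : Set E} {c : ℝ} (hA : (A \ {0}).Nonempty)
    (h : ∀ z ∈ A, z ≠ 0 → c ≤ ‖z‖) : c ≤ lambda1 A :=
  le_csInf (hA.image _) (by rintro _ ⟨z, ⟨hz, h0⟩, rfl⟩; exact h z hz h0)

end Minima

section CoveringRadius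

variable {E : Type*} [NormedAddCommGroup E] [NormedSpace ℝ E] [FiniteDimensional ℝ E]

/-- Rounding the coordinates in a basis of `span ℝ M` drawn from `M` bounds the distance to `M`. -/
theorem bddAbove_infDist_span (M : Submodule ℤ E) :
    BddAbove ((infDist · (M : Set E)) '' (span ℝ (M : Set E) : Set E)) := by
  obtain ⟨b, hbM, hbspan, hbli⟩ := exists_linearIndependent ℝ (M : Set E)
  let B := hbli.setFinite.toFinset
  refine ⟨∑ i ∈ B, ‖i‖, ?_⟩
  rintro _ ⟨y, hy, rfl⟩
  rw [← hbspan, ← hbli.setFinite.coe_toFinset] at hy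
  obtain ⟨f, -, rfl⟩ := mem_span_finset.1 hy
  have hz : ∑ i ∈ B, (⌊f i⌋ : ℝ) • i ∈ M := Submodule.sum_mem _ fun i hi => by
    rw [Int.cast_smul_eq_zsmul]
    exact M.smul_mem _ (hbM (hbli.setFinite.mem_toFinset.1 hi))
  calc infDist (∑ i ∈ B, f i • i) M ≤ ‖∑ i ∈ B, f i • i - ∑ i ∈ B, (⌊f i⌋ : ℝ) • i‖ := by
        rw [← dist_eq_norm]; exact infDist_le_dist_of_mem hz
    _ = ‖∑ i ∈ B, Int.fract (f i) • i‖ := by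
        rw [← Finset.sum_sub_distrib]; simp only [← sub_smul, Int.fract]
    _ ≤ ∑ i ∈ B, ‖i‖ := by
        refine (norm_sum_le _ _).trans (Finset.sum_le_sum fun i _ => ?_)
        rw [norm_smul, Real.norm_of_nonneg (Int.fract_nonneg _)]
        exact mul_le_of_le_one_left (norm_nonneg i) (Int.fract_lt_one _).le

theorem infDist_le_covRad (M : Submodule ℤ E) {x : E} (hx : x ∈ span ℝ (M : Set E)) :
    infDist x M ≤ covRad (M : Set E) :=
  le_csSup (bddAbove_infDist_span M) ⟨x, hx, rfl⟩

end CoveringRadius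

theorem pow_mul_le_of_forall_mul_le {f : ℕ → ℝ} {γ : ℝ} (hγ : 0 ≤ γ) {a b : ℕ} (hab : a ≤ b)
    (h : ∀ j, a ≤ j → j < b → γ * f j ≤ f (j + 1)) : γ ^ (b - a) * f a ≤ f b := by
  induction b, hab using Nat.le_induction with
  | base => simp
  | succ b hab ih =>
    calc γ ^ (b + 1 - a) * f a = γ * (γ ^ (b - a) * f a) := by
          rw [Nat.sub_add_comm hab, pow_succ]; ring
      _ ≤ γ * f b := by gcongr; exact ih fun j h₁ h₂ => h j h₁ (by omega)
      _ ≤ f (b + 1) := h b hab (by omega)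

theorem sum_sq_le_of_forall_two_mul_le {f : ℕ → ℝ} (hf : ∀ j, 0 ≤ f j) {k : ℕ}
    (h : ∀ j, 1 ≤ j → j < k → 2 * f j ≤ f (j + 1)) :
    ∑ j ∈ Finset.Ioc 0 k, f j ^ 2 ≤ 4 / 3 * f k ^ 2 := by
  induction k with
  | zero => simp only [Finset.Ioc_self, Finset.sum_empty]; positivity
  | succ k ih =>
    rw [Finset.sum_Ioc_succ_top (Nat.zero_le k)]
    rcases Nat.eq_zero_or_pos k with rfl | hk
    · simp only [Finset.Ioc_self, Finset.sum_empty, zero_add]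
      nlinarith [sq_nonneg (f 1)]
    · have h₂ := h k hk (by omega)
      have := ih fun j h₁ h₂ => h j h₁ (by omega)
      nlinarith [hf k]

theorem mul_two_pow_le_pow {γ q : ℝ} (hγ : 2 ≤ γ) (hqγ : q ≤ γ ^ 2 / 32) {k : ℕ} (hk : 2 ≤ k) :
    8 * q * 2 ^ k ≤ γ ^ k := by
  obtain ⟨k, rfl⟩ := Nat.exists_eq_add_of_le hk
  calc 8 * q * 2 ^ (2 + k) = (32 * q) * 2 ^ k := by ring
    _ ≤ γ ^ 2 * γ ^ k := by gcongr; linarith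
    _ = γ ^ (2 + k) := by ring

theorem sum_sq_le_of_le_two_mul_of_le {f b : ℕ → ℝ} {a : ℝ} {k m : ℕ} (hf : ∀ i, 0 ≤ f i)
    (hkm : k ≤ m) (h₁ : ∀ i, k < i → i ≤ k + 2 → i ≤ m → f i ≤ 2 * a)
    (h₂ : ∀ i, k + 2 < i → i ≤ m → f i ≤ b i) :
    ∑ i ∈ Finset.Ioc k m, f i ^ 2 ≤ 8 * a ^ 2 + ∑ i ∈ Finset.Ioc k m, b i ^ 2 := by
  have hk : k ≤ min (k + 2) m := le_min (by omega) hkm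
  rw [← Finset.sum_Ioc_consecutive _ hk (min_le_right (k + 2) m)]
  gcongr ?_ + ?_
  · calc ∑ i ∈ Finset.Ioc k (min (k + 2) m), f i ^ 2
          ≤ (Finset.Ioc k (min (k + 2) m)).card • (2 * a) ^ 2 :=
          Finset.sum_le_card_nsmul _ _ _ fun i hi => by
            simp only [Finset.mem_Ioc, le_min_iff] at hi
            exact pow_le_pow_left₀ (hf i) (h₁ i hi.1 hi.2.1 hi.2.2) 2
      _ ≤ 2 • (2 * a) ^ 2 := by
          gcongr
          rw [Nat.card_Ioc]
          omega
      _ = 8 * a ^ 2 := by rw [nsmul_eq_mul]; ring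
  · calc ∑ i ∈ Finset.Ioc (min (k + 2) m) m, f i ^ 2
          ≤ ∑ i ∈ Finset.Ioc (min (k + 2) m) m, b i ^ 2 :=
          Finset.sum_le_sum fun i hi => by
            simp only [Finset.mem_Ioc, min_lt_iff] at hi
            exact pow_le_pow_left₀ (hf i) (h₂ i (by omega) hi.2) 2
      _ ≤ ∑ i ∈ Finset.Ioc k m, b i ^ 2 :=
          Finset.sum_le_sum_of_subset_of_nonneg (Finset.Ioc_subset_Ioc_left hk)
            fun i _ _ => sq_nonneg _

section SubspaceChain

variable {E : Type*} [NormedAddCommGroup E] [InnerProductSpace ℝ E]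

theorem Submodule.starProjection_inf_orthogonal_of_le {K₁ K₂ : Submodule ℝ E}
    [K₁.HasOrthogonalProjection] [K₂.HasOrthogonalProjection]
    [(K₂ ⊓ K₁ᗮ).HasOrthogonalProjection] (h : K₁ ≤ K₂) (x : E) :
    (K₂ ⊓ K₁ᗮ).starProjection x = K₂.starProjection x - K₁.starProjection x := by
  refine eq_starProjection_of_mem_of_inner_eq_zero
    ⟨sub_mem (K₂.starProjection_apply_mem x) (h (K₁.starProjection_apply_mem x)), ?_⟩ ?_
  · intro u hu
    rw [real_inner_comm, show K₂.starProjection x - K₁.starProjection x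
      = (x - K₁.starProjection x) - (x - K₂.starProjection x) by abel, inner_sub_left,
      K₁.starProjection_inner_eq_zero x u hu, K₂.starProjection_inner_eq_zero x u (h hu), sub_zero]
  · rintro w ⟨hw₂, hw₁⟩
    rw [show x - (K₂.starProjection x - K₁.starProjection x)
      = (x - K₂.starProjection x) + K₁.starProjection x by abel, inner_add_left,
      K₂.starProjection_inner_eq_zero x w hw₂, hw₁ _ (K₁.starProjection_apply_mem x), add_zero]

/-- Block `0` is `V 0 ⊓ (V 0)ᗮ = ⊥`, because `0 - 1 = 0` in `ℕ`. -/
def chainBlock (V : ℕ → Submodule ℝ E) (i : ℕ) : Submodule ℝ E :=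
  V i ⊓ (V (i - 1))ᗮ

variable {V : ℕ → Submodule ℝ E} {m : ℕ}

theorem isOrtho_chainBlock (hV : MonotoneOn V (Set.Iic m)) {k i : ℕ} (hki : k < i)
    (him : i ≤ m) : V k ⟂ chainBlock V i :=
  ((V (i - 1)).isOrtho_orthogonal_right.mono_right inf_le_right).mono_left
    (hV (Set.mem_Iic.2 (by omega)) (Set.mem_Iic.2 (by omega)) (by omega))

variable [FiniteDimensional ℝ E]

theorem starProjection_add_starProjection_chainBlock {i : ℕ} (hV : V (i - 1) ≤ V i) (x : E) :
    (V (i - 1)).starProjection x + (chainBlock V i).starProjection x = (V i).starProjection x := by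
  rw [chainBlock, Submodule.starProjection_inf_orthogonal_of_le hV x, add_sub_cancel]

theorem starProjection_orthogonal_eq_starProjection_chainBlock {i : ℕ} (hV : V (i - 1) ≤ V i)
    {x : E} (hx : x ∈ V i) :
    (V (i - 1))ᗮ.starProjection x = (chainBlock V i).starProjection x := by
  have h := starProjection_add_starProjection_chainBlock hV x
  rw [starProjection_eq_self_iff.2 hx] at h
  rw [starProjection_orthogonal_val]
  exact sub_eq_of_eq_add' h.symm

theorem starProjection_chainBlock_eq_zero (hV : MonotoneOn V (Set.Iic m)) {k i : ℕ}
    (hki : k < i) (him : i ≤ m) {x : E} (hx : x ∈ V k) :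
    (chainBlock V i).starProjection x = 0 :=
  (Submodule.starProjection_apply_eq_zero_iff _).2 (isOrtho_chainBlock hV hki him hx)

theorem starProjection_chainBlock_starProjection_chainBlock_of_ne
    (hV : MonotoneOn V (Set.Iic m)) {i k : ℕ} (hi : i ≤ m) (hk : k ≤ m) (hik : i ≠ k) (x : E) :
    (chainBlock V i).starProjection ((chainBlock V k).starProjection x) = 0 := by
  rcases Nat.lt_or_gt_of_ne hik with h | h
  · exact (Submodule.starProjection_apply_eq_zero_iff _).2
      ((isOrtho_chainBlock hV h hk).symm.mono_right inf_le_left (starProjection_apply_mem _ _))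
  · exact starProjection_chainBlock_eq_zero hV h hi (starProjection_apply_mem (chainBlock V k) x).1

theorem norm_sq_starProjection_eq_add_sum (hV : MonotoneOn V (Set.Iic m)) {k l : ℕ}
    (hkl : k ≤ l) (hl : l ≤ m) (x : E) :
    ‖(V l).starProjection x‖ ^ 2
      = ‖(V k).starProjection x‖ ^ 2
        + ∑ i ∈ Finset.Ioc k l, ‖(chainBlock V i).starProjection x‖ ^ 2 := by
  induction l, hkl using Nat.le_induction with
  | base => simp
  | succ l hkl ih =>
    have hle : V l ≤ V (l + 1) := hV (Set.mem_Iic.2 (by omega)) (Set.mem_Iic.2 hl) (by omega)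
    have hsplit : (V (l + 1)).starProjection x
        = (V l).starProjection x + (chainBlock V (l + 1)).starProjection x :=
      (starProjection_add_starProjection_chainBlock (i := l + 1) hle x).symm
    have horth : ⟪(V l).starProjection x, (chainBlock V (l + 1)).starProjection x⟫ = 0 :=
      (isOrtho_chainBlock hV (by omega) hl).inner_eq (starProjection_apply_mem _ _)
        (starProjection_apply_mem _ _)
    rw [Finset.sum_Ioc_succ_top hkl, hsplit, ← add_assoc, ← ih (by omega), sq, sq, sq,
      norm_add_sq_eq_norm_sq_add_norm_sq_real horth]

theorem norm_sub_sq_eq_add_sum (hV : MonotoneOn V (Set.Iic m)) (htop : V m = ⊤) {k : ℕ}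
    (hk : k ≤ m) (x : E) {c : E} (hc : c ∈ V k) :
    ‖x - c‖ ^ 2 = ‖(V k).starProjection x - c‖ ^ 2
      + ∑ i ∈ Finset.Ioc k m, ‖(chainBlock V i).starProjection x‖ ^ 2 := by
  have h := norm_sq_starProjection_eq_add_sum hV hk le_rfl (x - c)
  rw [htop, starProjection_top, ContinuousLinearMap.id_apply, map_sub,
    starProjection_eq_self_iff.2 hc] at h
  rw [h]
  congr 1
  refine Finset.sum_congr rfl fun i hi => ?_
  obtain ⟨hki, him⟩ := Finset.mem_Ioc.1 hi
  rw [map_sub, starProjection_chainBlock_eq_zero hV hki him hc, sub_zero]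

end SubspaceChain

def spanChain {E : Type*} [NormedAddCommGroup E] [NormedSpace ℝ E]
    (Ls : ℕ → Submodule ℤ E) (i : ℕ) : Submodule ℝ E :=
  span ℝ (Ls i : Set E)

theorem mem_spanChain_of_mem {E : Type*} [NormedAddCommGroup E] [NormedSpace ℝ E]
    {Ls : ℕ → Submodule ℤ E} {i : ℕ} {w : E} (hw : w ∈ Ls i) : w ∈ spanChain Ls i :=
  subset_span hw

local notation "π[" Ls ", " i "]" => Submodule.starProjection (chainBlock (spanChain Ls) i)

section Embedding

variable {n m : ℕ} {Ls : ℕ → Submodule ℤ (EuclideanSpace ℝ (Fin n))} {α : ℝ}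

theorem filtEmbed_eq_sum (j : ℕ) (x : EuclideanSpace ℝ (Fin n)) :
    filtEmbed Ls m α j x = ∑ i ∈ Finset.Icc j m, α ^ (i - j) • π[Ls, i] x :=
  rfl

theorem filtEmbed_sub (j : ℕ) (x y : EuclideanSpace ℝ (Fin n)) :
    filtEmbed Ls m α j (x - y) = filtEmbed Ls m α j x - filtEmbed Ls m α j y := by
  simp only [filtEmbed_eq_sum, map_sub, smul_sub, Finset.sum_sub_distrib]

theorem filtEmbed_zero (j : ℕ) : filtEmbed Ls m α j 0 = 0 := by
  simp [filtEmbed_eq_sum]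

theorem filtEmbed_eq_zero_of_forall (j : ℕ) {x : EuclideanSpace ℝ (Fin n)}
    (hx : ∀ i, j ≤ i → i ≤ m → π[Ls, i] x = 0) : filtEmbed Ls m α j x = 0 := by
  rw [filtEmbed_eq_sum]
  exact Finset.sum_eq_zero fun i hi => by
    rw [hx i (Finset.mem_Icc.1 hi).1 (Finset.mem_Icc.1 hi).2, smul_zero]

theorem starProjection_chainBlock_filtEmbed (hV : MonotoneOn (spanChain Ls) (Set.Iic m))
    {i j : ℕ} (hji : j ≤ i) (him : i ≤ m) (x : EuclideanSpace ℝ (Fin n)) :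
    π[Ls, i] (filtEmbed Ls m α j x) = α ^ (i - j) • π[Ls, i] x := by
  rw [filtEmbed_eq_sum, map_sum, Finset.sum_eq_single i]
  · rw [map_smul, starProjection_eq_self_iff.2 (starProjection_apply_mem _ _)]
  · intro k hk hki
    rw [map_smul, starProjection_chainBlock_starProjection_chainBlock_of_ne hV him
      (Finset.mem_Icc.1 hk).2 (Ne.symm hki), smul_zero]
  · exact fun h => absurd (Finset.mem_Icc.2 ⟨hji, him⟩) h

theorem pow_mul_norm_le_norm_filtEmbed (hV : MonotoneOn (spanChain Ls) (Set.Iic m))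
    (hα : 0 ≤ α) {i j : ℕ} (hji : j ≤ i) (him : i ≤ m) (x : EuclideanSpace ℝ (Fin n)) :
    α ^ (i - j) * ‖π[Ls, i] x‖ ≤ ‖filtEmbed Ls m α j x‖ :=
  calc α ^ (i - j) * ‖π[Ls, i] x‖ = ‖π[Ls, i] (filtEmbed Ls m α j x)‖ := by
        rw [starProjection_chainBlock_filtEmbed hV hji him, norm_smul,
          Real.norm_of_nonneg (by positivity)]
    _ ≤ ‖filtEmbed Ls m α j x‖ := norm_starProjection_apply_le _ _

theorem norm_starProjection_chainBlock_le (hV : MonotoneOn (spanChain Ls) (Set.Iic m))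
    (hα : 1 / 2 ≤ α) {i j : ℕ} (hji : j ≤ i) (him : i ≤ m) (x : EuclideanSpace ℝ (Fin n)) :
    ‖π[Ls, i] x‖ ≤ 2 ^ (i - j) * ‖filtEmbed Ls m α j x‖ :=
  calc ‖π[Ls, i] x‖ ≤ (2 * α) ^ (i - j) * ‖π[Ls, i] x‖ :=
        le_mul_of_one_le_left (norm_nonneg _) (one_le_pow₀ (by linarith))
    _ = 2 ^ (i - j) * (α ^ (i - j) * ‖π[Ls, i] x‖) := by rw [mul_pow, mul_assoc]
    _ ≤ 2 ^ (i - j) * ‖filtEmbed Ls m α j x‖ := by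
        gcongr
        exact pow_mul_norm_le_norm_filtEmbed hV (by linarith) hji him x

theorem sum_sq_norm_starProjection_chainBlock_sub_le (hV : MonotoneOn (spanChain Ls) (Set.Iic m))
    (hα : 1 / 2 ≤ α) {J : ℕ} (hJ1 : 1 ≤ J) (hJm : J ≤ m) (p w₀ : EuclideanSpace ℝ (Fin n))
    {w : ℕ → EuclideanSpace ℝ (Fin n)}
    (hw : ∀ j t, J ≤ j → j ≤ t → J + 2 ≤ t → t ≤ m → π[Ls, t] (w j) = π[Ls, t] w₀) :
    ∑ i ∈ Finset.Ioc (J - 1) m, ‖π[Ls, i] (p - w J)‖ ^ 2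
      ≤ 8 * ‖filtEmbed Ls m α J (p - w J)‖ ^ 2
        + ∑ j ∈ Finset.Icc J m, ‖filtEmbed Ls m α j (p - w j)‖ ^ 2 := by
  rw [show Finset.Icc J m = Finset.Ioc (J - 1) m by
    ext; simp only [Finset.mem_Icc, Finset.mem_Ioc]; omega]
  refine sum_sq_le_of_le_two_mul_of_le (fun _ => norm_nonneg _) (by omega)
    (fun i h₁ h₂ h₃ => ?_) (fun i h₁ h₂ => ?_)
  · refine (norm_starProjection_chainBlock_le hV hα (j := J) (by omega) h₃ _).trans ?_
    gcongr
    calc (2 : ℝ) ^ (i - J) ≤ 2 ^ 1 := pow_le_pow_right₀ one_le_two (by omega)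
      _ = 2 := pow_one 2
  · rw [map_sub, hw J i le_rfl (by omega) (by omega) h₂,
      ← hw i i (by omega) le_rfl (by omega) h₂, ← map_sub]
    simpa using norm_starProjection_chainBlock_le hV hα (j := i) le_rfl h₂ (p - w i)

end Embedding

namespace IsPrimitiveChain

variable {n m : ℕ} {L : Submodule ℤ (EuclideanSpace ℝ (Fin n))}
  {Ls : ℕ → Submodule ℤ (EuclideanSpace ℝ (Fin n))} {q γ α : ℝ}

theorem monotoneOn (hc : IsPrimitiveChain L m Ls) : MonotoneOn Ls (Set.Iic m) := by
  intro a _ b hb hab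
  rw [Set.mem_Iic] at hb
  induction b, hab using Nat.le_induction with
  | base => exact le_rfl
  | succ b hab ih => exact (ih (by omega)).trans (hc.2.2.1 b (by omega)).le

theorem le_lattice (hc : IsPrimitiveChain L m Ls) {j : ℕ} (hj : j ≤ m) : Ls j ≤ L :=
  hc.2.1 ▸ hc.monotoneOn hj (Set.mem_Iic.2 le_rfl) hj

theorem spanChain_monotoneOn (hc : IsPrimitiveChain L m Ls) :
    MonotoneOn (spanChain Ls) (Set.Iic m) :=
  fun _ ha _ hb hab => span_mono (hc.monotoneOn ha hb hab)

theorem spanChain_le {j : ℕ} (hc : IsPrimitiveChain L m Ls) (hj : j ≤ m) :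
    spanChain Ls (j - 1) ≤ spanChain Ls j :=
  hc.spanChain_monotoneOn (Set.mem_Iic.2 (by omega)) hj (by omega)

theorem spanChain_zero (hc : IsPrimitiveChain L m Ls) : spanChain Ls 0 = ⊥ := by
  simp [spanChain, hc.1]

theorem spanChain_eq_top (hc : IsPrimitiveChain L m Ls)
    (hL : span ℝ (L : Set (EuclideanSpace ℝ (Fin n))) = ⊤) : spanChain Ls m = ⊤ := by
  rw [spanChain, hc.2.1, hL]

theorem mem_of_mem_spanChain (hc : IsPrimitiveChain L m Ls) {j : ℕ} (hj : j ≤ m)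
    {w : EuclideanSpace ℝ (Fin n)} (hw : w ∈ L) (hws : w ∈ spanChain Ls j) : w ∈ Ls j := by
  have : w ∈ (L : Set _) ∩ (spanChain Ls j : Set _) := ⟨hw, hws⟩
  rwa [spanChain, ← hc.2.2.2 j hj] at this

theorem quotLat_eq_image (hc : IsPrimitiveChain L m Ls) {j : ℕ} (hj : j ≤ m) :
    quotLat Ls j = π[Ls, j] '' (Ls j : Set (EuclideanSpace ℝ (Fin n))) :=
  Set.image_congr fun _ hx =>
    starProjection_orthogonal_eq_starProjection_chainBlock (hc.spanChain_le hj)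
      (mem_spanChain_of_mem hx)

theorem starProjection_chainBlock_mem_quotLat (hc : IsPrimitiveChain L m Ls) {j : ℕ} (hj : j ≤ m)
    {w : EuclideanSpace ℝ (Fin n)} (hw : w ∈ Ls j) : π[Ls, j] w ∈ quotLat Ls j :=
  hc.quotLat_eq_image hj ▸ ⟨w, hw, rfl⟩

theorem starProjection_chainBlock_ne_zero (hc : IsPrimitiveChain L m Ls) {t : ℕ} (ht : t ≤ m)
    {w : EuclideanSpace ℝ (Fin n)} (hw : w ∈ Ls t) (hw' : w ∉ Ls (t - 1)) : π[Ls, t] w ≠ 0 := by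
  intro h0
  have h := starProjection_add_starProjection_chainBlock (hc.spanChain_le ht) w
  rw [h0, add_zero, starProjection_eq_self_iff.2 (mem_spanChain_of_mem hw)] at h
  exact hw' (hc.mem_of_mem_spanChain (by omega) (hc.le_lattice ht hw)
    (h ▸ starProjection_apply_mem _ w))

theorem exists_top_block (hc : IsPrimitiveChain L m Ls) {w : EuclideanSpace ℝ (Fin n)}
    (hw : w ∈ L) (h0 : w ≠ 0) :
    ∃ s, 1 ≤ s ∧ s ≤ m ∧ lambda1 (quotLat Ls s) ≤ ‖π[Ls, s] w‖ ∧
      ∀ i, s < i → i ≤ m → π[Ls, i] w = 0 := by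
  classical
  have hex : ∃ s, w ∈ Ls s := ⟨m, hc.2.1 ▸ hw⟩
  set s := Nat.find hex
  have hsm : s ≤ m := Nat.find_min' hex (hc.2.1 ▸ hw)
  have hws : w ∈ Ls s := Nat.find_spec hex
  have hs1 : 1 ≤ s := Nat.one_le_iff_ne_zero.2 fun hs => h0 <| by
    rw [hs, hc.1] at hws
    exact (Submodule.mem_bot ℤ).1 hws
  have hne := hc.starProjection_chainBlock_ne_zero hsm hws (Nat.find_min hex (by omega))
  exact ⟨s, hs1, hsm, lambda1_le_norm (hc.starProjection_chainBlock_mem_quotLat hsm hws) hne,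
    fun i hsi him => starProjection_chainBlock_eq_zero hc.spanChain_monotoneOn hsi him
      (mem_spanChain_of_mem hws)⟩

theorem quotLat_eq_coe_map (j : ℕ) :
    quotLat Ls j = ((Ls j).map (((spanChain Ls (j - 1))ᗮ.starProjection :
      EuclideanSpace ℝ (Fin n) →ₗ[ℝ] EuclideanSpace ℝ (Fin n)).restrictScalars ℤ) :
        Set (EuclideanSpace ℝ (Fin n))) := by
  rw [Submodule.map_coe]
  rfl

theorem infDist_le_covRad_quotLat (hc : IsPrimitiveChain L m Ls) {j : ℕ} (hj : j ≤ m)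
    {x : EuclideanSpace ℝ (Fin n)} (hx : x ∈ spanChain Ls j) :
    infDist (π[Ls, j] x) (quotLat Ls j) ≤ covRad (quotLat Ls j) := by
  rw [quotLat_eq_coe_map]
  refine infDist_le_covRad _ ?_
  rw [Submodule.map_coe, LinearMap.coe_restrictScalars, Submodule.span_image]
  exact ⟨x, hx, starProjection_orthogonal_eq_starProjection_chainBlock (hc.spanChain_le hj) hx⟩

theorem covRad_quotLat_nonneg (hc : IsPrimitiveChain L m Ls) {j : ℕ} (hj : j ≤ m) :
    0 ≤ covRad (quotLat Ls j) :=
  infDist_nonneg.trans (hc.infDist_le_covRad_quotLat hj (zero_mem _))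

/-- Nearest-plane rounding: approximate the top block by a point of `L_{k+1}`, then recurse on the
part of the remainder in `span L_k`. -/
theorem infDist_sq_le_sum_covRad (hc : IsPrimitiveChain L m Ls) {k : ℕ} (hk : k ≤ m)
    {x : EuclideanSpace ℝ (Fin n)} (hx : x ∈ spanChain Ls k) :
    infDist x (Ls k) ^ 2 ≤ ∑ j ∈ Finset.Ioc 0 k, covRad (quotLat Ls j) ^ 2 := by
  induction k generalizing x with
  | zero =>
    rw [hc.spanChain_zero, mem_bot] at hx
    simp [hx, infDist_zero_of_mem (zero_mem (Ls 0))]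
  | succ k ih =>
    rw [Finset.sum_Ioc_succ_top (Nat.zero_le k)]
    refine le_of_forall_pos_lt_add fun ε hε => ?_
    have hle : spanChain Ls k ≤ spanChain Ls (k + 1) := by simpa using hc.spanChain_le hk
    have hne : (quotLat Ls (k + 1)).Nonempty :=
      hc.quotLat_eq_image hk ▸ ⟨0, 0, zero_mem _, map_zero _⟩
    obtain ⟨p, hp, hxp⟩ := exists_dist_sq_lt_of_infDist_sq_le hne
      (pow_le_pow_left₀ infDist_nonneg (hc.infDist_le_covRad_quotLat hk hx) 2) (half_pos hε)
    rw [hc.quotLat_eq_image hk] at hp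
    obtain ⟨u, hu, rfl⟩ := hp
    rw [dist_eq_norm, ← map_sub] at hxp
    set y := x - u
    obtain ⟨c, hcL, hyc⟩ := exists_dist_sq_lt_of_infDist_sq_le ⟨0, zero_mem (Ls k)⟩
      (ih (by omega) (starProjection_apply_mem _ y)) (half_pos hε)
    have hsplit : x - (u + c) = ((spanChain Ls k).starProjection y - c) + π[Ls, k + 1] y := by
      have h := starProjection_add_starProjection_chainBlock (V := spanChain Ls) (i := k + 1) hle y
      rw [starProjection_eq_self_iff.2 (sub_mem hx (mem_spanChain_of_mem hu))] at h
      simp only [Nat.add_sub_cancel] at h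
      rw [← sub_sub, ← h]
      abel
    have horth : ⟪(spanChain Ls k).starProjection y - c, π[Ls, k + 1] y⟫ = 0 :=
      (isOrtho_chainBlock hc.spanChain_monotoneOn (Nat.lt_succ_self k) hk).inner_eq
        (sub_mem (starProjection_apply_mem _ y) (mem_spanChain_of_mem hcL))
        (starProjection_apply_mem _ y)
    have huc : u + c ∈ Ls (k + 1) :=
      add_mem hu (hc.monotoneOn (Set.mem_Iic.2 (by omega)) hk (Nat.le_succ k) hcL)
    rw [dist_eq_norm] at hyc
    calc infDist x (Ls (k + 1)) ^ 2 ≤ ‖x - (u + c)‖ ^ 2 :=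
          pow_le_pow_left₀ infDist_nonneg (dist_eq_norm x _ ▸ infDist_le_dist_of_mem huc) 2
      _ = ‖(spanChain Ls k).starProjection y - c‖ ^ 2 + ‖π[Ls, k + 1] y‖ ^ 2 := by
          rw [hsplit, sq, sq, sq, norm_add_sq_eq_norm_sq_add_norm_sq_real horth]
      _ < _ := by linarith

theorem lambda1_quotLat_le_lambda1_filtEmbed (hc : IsPrimitiveChain L m Ls) (hα : 0 ≤ α)
    (hγ : 0 ≤ γ) (hαγ : 1 ≤ α * γ)
    (hg : ∀ j, 1 ≤ j → j < m → lambda1 (quotLat Ls (j + 1)) ≥ γ * lambda1 (quotLat Ls j))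
    {j : ℕ} (hj1 : 1 ≤ j) (hjm : j ≤ m) :
    lambda1 (quotLat Ls j)
      ≤ lambda1 (filtEmbed Ls m α j '' (L : Set (EuclideanSpace ℝ (Fin n)))) := by
  have hV := hc.spanChain_monotoneOn
  obtain ⟨u, hu, hu'⟩ := SetLike.exists_of_lt (Nat.sub_add_cancel hj1 ▸ hc.2.2.1 (j - 1) (by omega))
  have hEu : π[Ls, j] (filtEmbed Ls m α j u) ≠ 0 := by
    rw [starProjection_chainBlock_filtEmbed hV le_rfl hjm, Nat.sub_self, pow_zero, one_smul]
    exact hc.starProjection_chainBlock_ne_zero hjm hu hu'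
  refine le_lambda1 ⟨_, ⟨u, hc.le_lattice hjm hu, rfl⟩, fun h => hEu (by rw [h, map_zero])⟩ ?_
  rintro _ ⟨w, hw, rfl⟩ hEw
  obtain ⟨s, hs1, hsm, hlam, hhigh⟩ :=
    hc.exists_top_block hw fun h => hEw (by rw [h, filtEmbed_zero])
  have hjs : j ≤ s := by
    by_contra! h
    exact hEw (filtEmbed_eq_zero_of_forall j fun i hji him => hhigh i (by omega) him)
  calc lambda1 (quotLat Ls j) ≤ (α * γ) ^ (s - j) * lambda1 (quotLat Ls j) :=
        le_mul_of_one_le_left (lambda1_nonneg _) (one_le_pow₀ hαγ)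
    _ = α ^ (s - j) * (γ ^ (s - j) * lambda1 (quotLat Ls j)) := by rw [mul_pow, mul_assoc]
    _ ≤ α ^ (s - j) * ‖π[Ls, s] w‖ := by
        gcongr
        exact (pow_mul_le_of_forall_mul_le hγ hjs fun i h₁ h₂ => hg i (by omega) (by omega)).trans
          hlam
    _ ≤ ‖filtEmbed Ls m α j w‖ := pow_mul_norm_le_norm_filtEmbed hV hα hjs hsm w

theorem sum_sq_covRad_quotLat_le (hc : IsPrimitiveChain L m Ls)
    (hcov : ∀ j, 1 ≤ j → j ≤ m → covRad (quotLat Ls j) ≤ q * lambda1 (quotLat Ls j) / 2)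
    (hg : ∀ j, 1 ≤ j → j < m → lambda1 (quotLat Ls (j + 1)) ≥ γ * lambda1 (quotLat Ls j))
    (hγ : 2 ≤ γ) (hq : 0 ≤ q) {k : ℕ} (hk : k ≤ m) :
    ∑ j ∈ Finset.Ioc 0 k, covRad (quotLat Ls j) ^ 2 ≤ (q * lambda1 (quotLat Ls k)) ^ 2 / 3 :=
  calc ∑ j ∈ Finset.Ioc 0 k, covRad (quotLat Ls j) ^ 2
      ≤ ∑ j ∈ Finset.Ioc 0 k, (q * lambda1 (quotLat Ls j) / 2) ^ 2 :=
        Finset.sum_le_sum fun j hj => pow_le_pow_left₀ (hc.covRad_quotLat_nonneg (by grind))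
          (hcov j (Finset.mem_Ioc.1 hj).1 (by grind)) 2
    _ ≤ 4 / 3 * (q * lambda1 (quotLat Ls k) / 2) ^ 2 :=
        sum_sq_le_of_forall_two_mul_le
          (fun j => div_nonneg (mul_nonneg hq (lambda1_nonneg _)) zero_le_two) fun j h₁ h₂ => by
            have h₃ := mul_le_mul_of_nonneg_left (hg j h₁ (by omega)) hq
            have h₄ := mul_le_mul_of_nonneg_right hγ (mul_nonneg hq (lambda1_nonneg (quotLat Ls j)))
            linarith
    _ = (q * lambda1 (quotLat Ls k)) ^ 2 / 3 := by ring

theorem exists_scale (hc : IsPrimitiveChain L m Ls)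
    (hcov : ∀ j, 1 ≤ j → j ≤ m → covRad (quotLat Ls j) ≤ q * lambda1 (quotLat Ls j) / 2)
    (hg : ∀ j, 1 ≤ j → j < m → lambda1 (quotLat Ls (j + 1)) ≥ γ * lambda1 (quotLat Ls j))
    (hγ : 2 ≤ γ) (hq : 0 ≤ q) {d : ℝ} (hd : 0 < d)
    (hdm : d ^ 2 ≤ ∑ j ∈ Finset.Ioc 0 m, covRad (quotLat Ls j) ^ 2) :
    ∃ J, 1 ≤ J ∧ J ≤ m ∧ d ≤ q * lambda1 (quotLat Ls J) ∧
      ∀ x ∈ spanChain Ls (J - 1), infDist x (Ls (J - 1)) ^ 2 ≤ d ^ 2 / 3 := by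
  classical
  have hsum := fun k => hc.sum_sq_covRad_quotLat_le hcov hg hγ hq (k := k)
  have hm1 : 1 ≤ m := Nat.one_le_iff_ne_zero.2 fun hm => by
    subst hm
    simp only [Finset.Ioc_self, Finset.sum_empty] at hdm
    nlinarith
  have hdm' : d ≤ q * lambda1 (quotLat Ls m) := by
    have := hsum m le_rfl
    nlinarith [mul_nonneg hq (lambda1_nonneg (quotLat Ls m))]
  have hex : ∃ J, 1 ≤ J ∧ d ≤ q * lambda1 (quotLat Ls J) := ⟨m, hm1, hdm'⟩
  obtain ⟨hJ1, hdJ⟩ := Nat.find_spec hex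
  have hJm : Nat.find hex ≤ m := Nat.find_min' hex ⟨hm1, hdm'⟩
  refine ⟨Nat.find hex, hJ1, hJm, hdJ, fun x hx =>
    (hc.infDist_sq_le_sum_covRad (by omega) hx).trans ?_⟩
  rcases hJ1.eq_or_lt with hJ | hJ
  · rw [← hJ, Nat.sub_self, Finset.Ioc_self, Finset.sum_empty]
    positivity
  · have hlt : q * lambda1 (quotLat Ls (Nat.find hex - 1)) < d := by
      have := Nat.find_min hex (Nat.sub_lt (by omega) one_pos)
      simp only [not_and, not_le] at this
      exact this (by omega)
    have := hsum (Nat.find hex - 1) (by omega)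
    nlinarith [mul_nonneg hq (lambda1_nonneg (quotLat Ls (Nat.find hex - 1)))]

/-- A block of `w` at level `s ≥ max j (J + 2)` would be longer than `λ_s ≥ 8 · 2^(s-J) d`,
while closeness of the embeddings bounds it by `d + 2^(s-j) d / 10`. -/
theorem starProjection_chainBlock_eq_zero_of_norm_filtEmbed_sub_le
    (hc : IsPrimitiveChain L m Ls) (hγ : 2 ≤ γ) (hqγ : q ≤ γ ^ 2 / 32)
    (hg : ∀ j, 1 ≤ j → j < m → lambda1 (quotLat Ls (j + 1)) ≥ γ * lambda1 (quotLat Ls j))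
    (hα : 1 / 2 ≤ α) {d : ℝ} (hd : 0 < d) {J j : ℕ} (hJ1 : 1 ≤ J) (hJj : J ≤ j)
    (hdJ : d ≤ q * lambda1 (quotLat Ls J)) {v w : EuclideanSpace ℝ (Fin n)} (hv : ‖v‖ ≤ d)
    (hw : w ∈ L) (hvw : ‖filtEmbed Ls m α j (v - w)‖ ≤ d / 10) {t : ℕ} (hjt : j ≤ t)
    (hJt : J + 2 ≤ t) (htm : t ≤ m) : π[Ls, t] w = 0 := by
  by_contra hne
  obtain ⟨s, hs1, hsm, hlam, hhigh⟩ :=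
    hc.exists_top_block hw fun h => hne (by rw [h, map_zero])
  have hts : t ≤ s := by
    by_contra! h
    exact hne (hhigh t h htm)
  have hup : lambda1 (quotLat Ls s) ≤ d + 2 ^ (s - j) * (d / 10) :=
    calc lambda1 (quotLat Ls s) ≤ ‖π[Ls, s] w‖ := hlam
      _ = ‖π[Ls, s] v - π[Ls, s] (v - w)‖ := by rw [map_sub, sub_sub_cancel]
      _ ≤ ‖π[Ls, s] v‖ + ‖π[Ls, s] (v - w)‖ := norm_sub_le _ _
      _ ≤ d + 2 ^ (s - j) * (d / 10) := by
          gcongr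
          · exact (norm_starProjection_apply_le _ _).trans hv
          · exact (norm_starProjection_chainBlock_le (j := j) hc.spanChain_monotoneOn hα
              (by omega) hsm _).trans (by gcongr)
  have hlow : 8 * 2 ^ (s - j) * d ≤ lambda1 (quotLat Ls s) :=
    calc 8 * 2 ^ (s - j) * d ≤ 8 * 2 ^ (s - J) * (q * lambda1 (quotLat Ls J)) := by
          gcongr
          · norm_num
      _ = 8 * q * 2 ^ (s - J) * lambda1 (quotLat Ls J) := by ring
      _ ≤ γ ^ (s - J) * lambda1 (quotLat Ls J) := by
          gcongr
          · exact lambda1_nonneg _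
          · exact mul_two_pow_le_pow hγ hqγ (by omega)
      _ ≤ lambda1 (quotLat Ls s) :=
          pow_mul_le_of_forall_mul_le (by linarith) (by omega)
            fun i h₁ h₂ => hg i (by omega) (by omega)
  have : (1 : ℝ) ≤ 2 ^ (s - j) := one_le_pow₀ one_le_two
  nlinarith

theorem sq_div_le_sum_sq_norm_filtEmbed_sub [DiscreteTopology L] (hc : IsPrimitiveChain L m Ls)
    (htop : spanChain Ls m = ⊤) (hγ : 2 ≤ γ) (hqγ : q ≤ γ ^ 2 / 32)
    (hg : ∀ j, 1 ≤ j → j < m → lambda1 (quotLat Ls (j + 1)) ≥ γ * lambda1 (quotLat Ls j))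
    (hα : 1 / 2 ≤ α) {p : EuclideanSpace ℝ (Fin n)} (hd : 0 < infDist p L) {J : ℕ}
    (hJ1 : 1 ≤ J) (hJm : J ≤ m) (hdJ : infDist p L ≤ q * lambda1 (quotLat Ls J))
    (hcovJ : ∀ x ∈ spanChain Ls (J - 1), infDist x (Ls (J - 1)) ^ 2 ≤ infDist p L ^ 2 / 3)
    (w : ℕ → EuclideanSpace ℝ (Fin n)) (hw : ∀ j, w j ∈ L) :
    infDist p L ^ 2 / 100 ≤ ∑ j ∈ Finset.Icc J m, ‖filtEmbed Ls m α j (p - w j)‖ ^ 2 := by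
  set d := infDist p (L : Set (EuclideanSpace ℝ (Fin n)))
  set η := fun j => ‖filtEmbed Ls m α j (p - w j)‖
  -- Otherwise `w J + c` below is a lattice point closer to `p` than `d`.
  by_contra! hsmall
  have hV := hc.spanChain_monotoneOn
  have hη : ∀ j, J ≤ j → j ≤ m → η j ≤ d / 10 := fun j h₁ h₂ => by
    have := (Finset.single_le_sum (fun i _ => sq_nonneg (η i))
      (Finset.mem_Icc.2 ⟨h₁, h₂⟩)).trans hsmall.le
    nlinarith [norm_nonneg (filtEmbed Ls m α j (p - w j))]
  obtain ⟨w₀, hw₀, hpw₀⟩ := IsClosed.exists_infDist_eq_dist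
    (AddSubgroup.isClosed_of_discrete (H := L.toAddSubgroup)) ⟨0, zero_mem L⟩ p
  have hv : ‖p - w₀‖ ≤ d := by rw [← dist_eq_norm]; exact hpw₀.ge
  have hhigh : ∀ j t, J ≤ j → j ≤ t → J + 2 ≤ t → t ≤ m → π[Ls, t] (w j) = π[Ls, t] w₀ :=
    fun j t hJj hjt hJt htm => by
      rw [← sub_eq_zero, ← map_sub]
      exact hc.starProjection_chainBlock_eq_zero_of_norm_filtEmbed_sub_le hγ hqγ hg hα hd hJ1 hJj
        hdJ hv (sub_mem (hw j) hw₀) (by rw [sub_sub_sub_cancel_right]; exact hη j hJj (by omega))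
        hjt hJt htm
  obtain ⟨c, hcL, hpc⟩ := exists_dist_sq_lt_of_infDist_sq_le ⟨0, zero_mem _⟩
    (hcovJ _ (starProjection_apply_mem _ (p - w J))) (ε := d ^ 2 / 10) (by positivity)
  rw [dist_eq_norm] at hpc
  have hfar : d ≤ ‖p - w J - c‖ := by
    rw [sub_sub, ← dist_eq_norm]
    exact infDist_le_dist_of_mem (add_mem (hw J) (hc.le_lattice (by omega) hcL))
  have hsplit := norm_sub_sq_eq_add_sum hV htop (by omega) (p - w J) (mem_spanChain_of_mem hcL)
  have hblocks := sum_sq_norm_starProjection_chainBlock_sub_le hV hα hJ1 hJm p w₀ hhigh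
  have hηJ : η J ^ 2 ≤ ∑ i ∈ Finset.Icc J m, η i ^ 2 :=
    Finset.single_le_sum (fun i _ => sq_nonneg (η i)) (Finset.mem_Icc.2 ⟨le_rfl, hJm⟩)
  nlinarith [pow_le_pow_left₀ hd.le hfar 2]

theorem mul_lambda1_quotLat_le_sq_mul_lambda1_filtEmbed (hc : IsPrimitiveChain L m Ls)
    (hq : 1 ≤ q) (hγ : 2 ≤ γ)
    (hg : ∀ j, 1 ≤ j → j < m → lambda1 (quotLat Ls (j + 1)) ≥ γ * lambda1 (quotLat Ls j))
    (hα : 1 / 2 ≤ α) {J j : ℕ} (hJ1 : 1 ≤ J) (hJj : J ≤ j) (hjm : j ≤ m) :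
    q * lambda1 (quotLat Ls J) ≤ q ^ 2 * lambda1 (filtEmbed Ls m α j '' L) := by
  have hJ : lambda1 (quotLat Ls J) ≤ lambda1 (quotLat Ls j) :=
    (le_mul_of_one_le_left (lambda1_nonneg _) (one_le_pow₀ (by linarith : (1 : ℝ) ≤ γ))).trans
      (pow_mul_le_of_forall_mul_le (by linarith) hJj fun i h₁ h₂ => hg i (by omega) (by omega))
  have hj := hc.lambda1_quotLat_le_lambda1_filtEmbed (α := α) (by linarith) (by linarith)
    (by nlinarith) hg (by omega) hjm
  calc q * lambda1 (quotLat Ls J) ≤ q * lambda1 (filtEmbed Ls m α j '' L) := by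
        gcongr; exact hJ.trans hj
    _ ≤ q ^ 2 * lambda1 (filtEmbed Ls m α j '' L) := by
        rw [sq, mul_assoc]
        exact le_mul_of_one_le_left (mul_nonneg (by linarith) (lambda1_nonneg _)) hq

theorem sq_div_le_sum_sq_min [DiscreteTopology L] (hc : IsPrimitiveChain L m Ls)
    (htop : spanChain Ls m = ⊤) (hq : 1 ≤ q) (hγ : 2 ≤ γ) (hqγ : q ≤ γ ^ 2 / 32)
    (hg : ∀ j, 1 ≤ j → j < m → lambda1 (quotLat Ls (j + 1)) ≥ γ * lambda1 (quotLat Ls j))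
    (hα : 1 / 2 ≤ α) {p : EuclideanSpace ℝ (Fin n)} (hd : 0 < infDist p L) {J : ℕ}
    (hJ1 : 1 ≤ J) (hJm : J ≤ m) (hdJ : infDist p L ≤ q * lambda1 (quotLat Ls J))
    (hcovJ : ∀ x ∈ spanChain Ls (J - 1), infDist x (Ls (J - 1)) ^ 2 ≤ infDist p L ^ 2 / 3) :
    infDist p L ^ 2 / 100 ≤ ∑ j ∈ Finset.Icc J m,
      min (infDist (filtEmbed Ls m α j p) (filtEmbed Ls m α j '' L))
        (q ^ 2 * lambda1 (filtEmbed Ls m α j '' L)) ^ 2 := by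
  set d := infDist p (L : Set (EuclideanSpace ℝ (Fin n)))
  have hcap : ∀ j ∈ Finset.Icc J m, d ≤ q ^ 2 * lambda1 (filtEmbed Ls m α j '' L) :=
    fun j hj => hdJ.trans (hc.mul_lambda1_quotLat_le_sq_mul_lambda1_filtEmbed hq hγ hg hα hJ1
      (Finset.mem_Icc.1 hj).1 (Finset.mem_Icc.1 hj).2)
  by_cases hfar : ∃ j ∈ Finset.Icc J m,
      d ≤ infDist (filtEmbed Ls m α j p) (filtEmbed Ls m α j '' L)
  · obtain ⟨j, hj, hdj⟩ := hfar
    calc d ^ 2 / 100 ≤ d ^ 2 := by linarith [sq_nonneg d]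
      _ ≤ min (infDist (filtEmbed Ls m α j p) (filtEmbed Ls m α j '' L))
            (q ^ 2 * lambda1 (filtEmbed Ls m α j '' L)) ^ 2 :=
          pow_le_pow_left₀ hd.le (le_min hdj (hcap j hj)) 2
      _ ≤ _ := Finset.single_le_sum (f := fun j => min (infDist (filtEmbed Ls m α j p)
            (filtEmbed Ls m α j '' L)) (q ^ 2 * lambda1 (filtEmbed Ls m α j '' L)) ^ 2)
            (fun i _ => sq_nonneg _) hj
  · push Not at hfar
    calc d ^ 2 / 100 ≤ ∑ j ∈ Finset.Icc J m,
          infDist (filtEmbed Ls m α j p) (filtEmbed Ls m α j '' L) ^ 2 :=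
          le_sum_sq_infDist _ (S := fun j => filtEmbed Ls m α j '' L)
            (fun j => ⟨_, 0, zero_mem L, rfl⟩) fun x hx => by
            choose w hwL hw using hx
            simp only [← hw, dist_eq_norm, ← filtEmbed_sub]
            exact hc.sq_div_le_sum_sq_norm_filtEmbed_sub htop hγ hqγ hg hα hd hJ1 hJm hdJ hcovJ
              w hwL
      _ = _ := Finset.sum_congr rfl fun j hj => by
          rw [min_eq_left ((hfar j hj).le.trans (hcap j hj))]

end IsPrimitiveChain

/-- Contraction of the compressed-projection embedding: there is an absolute constant
`c_E > 0` such that for any `(q, γ)`-filtration with `γ ≥ 2`, `q ≤ γ²/32`, and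
`1/2 ≤ α < 1`, `Σ_{j=1}^m min(dist(E_{j,α}(x − y), E_{j,α}(L)), q²·λ₁(E_{j,α}(L)))²
≥ c_E·dist(x − y, L)²`. -/
theorem filtEmbed_contraction :
    ∃ c_E : ℝ, 0 < c_E ∧
      ∀ (n : ℕ) (L : Submodule ℤ (EuclideanSpace ℝ (Fin n))) [DiscreteTopology L],
        IsZLattice ℝ L →
          ∀ (m : ℕ) (Ls : ℕ → Submodule ℤ (EuclideanSpace ℝ (Fin n))) (q γ : ℝ),
            1 ≤ q → 2 ≤ γ → q ≤ γ ^ 2 / 32 →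
              IsQGFiltration L m Ls q γ →
                ∀ (α : ℝ), 1 / 2 ≤ α → α < 1 →
                  ∀ (x y : EuclideanSpace ℝ (Fin n)),
                    ∑ j ∈ Finset.Icc 1 m,
                        min (Metric.infDist (filtEmbed Ls m α j (x - y))
                              (filtEmbed Ls m α j '' (L : Set (EuclideanSpace ℝ (Fin n)))))
                          (q ^ 2 * lambda1 (filtEmbed Ls m α j '' (L : Set (EuclideanSpace ℝ (Fin n))))) ^ 2
                      ≥ c_E * Metric.infDist (x - y) (L : Set (EuclideanSpace ℝ (Fin n))) ^ 2 := by
  refine ⟨1 / 100, by norm_num, ?_⟩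
  intro n L _ hZ m Ls q γ hq hγ hqγ ⟨hc, hcov, hg⟩ α hα _ x y
  have htop := hc.spanChain_eq_top hZ.span_top
  rcases (infDist_nonneg (x := x - y) (s := (L : Set (EuclideanSpace ℝ (Fin n))))).eq_or_lt
    with hd | hd
  · rw [← hd]
    simpa using Finset.sum_nonneg fun j _ => sq_nonneg _
  obtain ⟨J, hJ1, hJm, hdJ, hcovJ⟩ := hc.exists_scale hcov hg hγ (by linarith) hd
    (hc.2.1 ▸ hc.infDist_sq_le_sum_covRad le_rfl (htop ▸ mem_top))
  calc 1 / 100 * infDist (x - y) L ^ 2 = infDist (x - y) L ^ 2 / 100 := by ring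
    _ ≤ _ := hc.sq_div_le_sum_sq_min htop hq hγ hqγ hg hα hd hJ1 hJm hdJ hcovJ
    _ ≤ _ := Finset.sum_le_sum_of_subset_of_nonneg (Finset.Icc_subset_Icc_left hJ1)
        fun _ _ _ => sq_nonneg _
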